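/- For every real number x, lim_{n→∞} 1/((n-1)·Be(n-1, 1-e^{-(log log n + x)})) = exp(-e^{-x}). -/

import Mathlib

open Real

noncomputable def Be (x y : ℝ) : ℝ := Real.Gamma x * Real.Gamma y / Real.Gamma (x + y)

/-!
With `a = n - 1`, `t = 1 - ε` and `ε = e^{-x} / log n`, the quantity is `Γ(a + t) / (a Γ(a) Γ(t))`.
Log-convexity of `Γ` traps `Γ(a + t)` between `a Γ(a) (a + 1)^(t - 1)` and `Γ(a) a^t`, so the
quantity lies between `n^(-ε) / Γ(t)` and `(n - 1)^(-ε) / Γ(t) ≤ 2^ε n^(-ε) / Γ(t)`. The choice of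
`ε` makes `n^(-ε) = exp(-e^{-x})` exactly, and `ε → 0`, `Γ(t) → Γ(1) = 1` squeeze the limit.
-/

open Filter Topology

namespace Real

variable {a t : ℝ}

theorem Gamma_add_le_Gamma_mul_rpow (ha : 0 < a) (ht₀ : 0 < t) (ht₁ : t < 1) :
    Gamma (a + t) ≤ Gamma a * a ^ t := by
  have hΓ := Gamma_pos_of_pos ha
  have h := Gamma_mul_add_mul_le_rpow_Gamma_mul_rpow_Gamma ha (by linarith : 0 < a + 1)
    (sub_pos.2 ht₁) ht₀ (sub_add_cancel 1 t)
  rw [show (1 - t) * a + t * (a + 1) = a + t by ring, Gamma_add_one ha.ne',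
    mul_rpow ha.le hΓ.le] at h
  calc Gamma (a + t) ≤ Gamma a ^ (1 - t) * (a ^ t * Gamma a ^ t) := h
    _ = Gamma a ^ (1 - t + t) * a ^ t := by rw [rpow_add hΓ]; ring
    _ = Gamma a * a ^ t := by rw [sub_add_cancel, rpow_one]

theorem mul_Gamma_le_Gamma_add_mul_rpow (ha : 0 < a) (ht₀ : 0 < t) (ht₁ : t < 1) :
    a * Gamma a ≤ Gamma (a + t) * (a + t) ^ (1 - t) := by
  have hat : 0 < a + t := by linarith
  have hΓ := Gamma_pos_of_pos hat
  have h := Gamma_mul_add_mul_le_rpow_Gamma_mul_rpow_Gamma hat (by linarith : 0 < a + t + 1)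
    ht₀ (sub_pos.2 ht₁) (add_sub_cancel t 1)
  rw [show t * (a + t) + (1 - t) * (a + t + 1) = a + 1 by ring, Gamma_add_one ha.ne',
    Gamma_add_one hat.ne', mul_rpow hat.le hΓ.le] at h
  calc a * Gamma a ≤ Gamma (a + t) ^ t * ((a + t) ^ (1 - t) * Gamma (a + t) ^ (1 - t)) := h
    _ = Gamma (a + t) ^ (t + (1 - t)) * (a + t) ^ (1 - t) := by rw [rpow_add hΓ]; ring
    _ = Gamma (a + t) * (a + t) ^ (1 - t) := by rw [add_sub_cancel, rpow_one]

theorem continuousAt_Gamma_one : ContinuousAt Gamma 1 :=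
  (differentiableAt_Gamma fun m => by linarith [(m.cast_nonneg : (0 : ℝ) ≤ m)]).continuousAt

end Real

section Beta

variable {a t : ℝ}

theorem one_div_mul_Be : 1 / (a * Be a t) = Gamma (a + t) / (a * Gamma a * Gamma t) := by
  simp only [Be, div_eq_mul_inv, mul_inv, inv_inv, one_mul]; ring

theorem rpow_div_Gamma_le_one_div_mul_Be (ha : 0 < a) (ht₀ : 0 < t) (ht₁ : t < 1) :
    (a + 1) ^ (t - 1) / Gamma t ≤ 1 / (a * Be a t) := by
  have hat : 0 < a + t := by linarith
  rw [one_div_mul_Be, ← div_div]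
  gcongr
  calc (a + 1) ^ (t - 1) ≤ (a + t) ^ (t - 1) :=
        rpow_le_rpow_of_nonpos hat (by linarith) (by linarith)
    _ ≤ Gamma (a + t) / (a * Gamma a) := by
      rw [le_div_iff₀ (by have := Gamma_pos_of_pos ha; positivity)]
      calc (a + t) ^ (t - 1) * (a * Gamma a)
          ≤ (a + t) ^ (t - 1) * (Gamma (a + t) * (a + t) ^ (1 - t)) :=
            mul_le_mul_of_nonneg_left (mul_Gamma_le_Gamma_add_mul_rpow ha ht₀ ht₁) (by positivity)
        _ = Gamma (a + t) * (a + t) ^ (t - 1 + (1 - t)) := by rw [rpow_add hat]; ring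
        _ = Gamma (a + t) := by rw [sub_add_sub_cancel', sub_self, rpow_zero, mul_one]

theorem one_div_mul_Be_le_rpow_div_Gamma (ha : 0 < a) (ht₀ : 0 < t) (ht₁ : t < 1) :
    1 / (a * Be a t) ≤ a ^ (t - 1) / Gamma t := by
  have hΓ := Gamma_pos_of_pos ha
  rw [one_div_mul_Be, ← div_div]
  gcongr
  calc Gamma (a + t) / (a * Gamma a) ≤ Gamma a * a ^ t / (a * Gamma a) := by
        gcongr; exact Gamma_add_le_Gamma_mul_rpow ha ht₀ ht₁
    _ = a ^ (t - 1) := by rw [rpow_sub_one ha.ne']; field_simp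

theorem one_div_mul_Be_sub_one_mem_Icc {y ε : ℝ} (hy : 2 ≤ y) (hε₀ : 0 < ε) (hε₁ : ε < 1) :
    1 / ((y - 1) * Be (y - 1) (1 - ε)) ∈
      Set.Icc (y ^ (-ε) / Gamma (1 - ε)) (y ^ (-ε) / 2 ^ (-ε) / Gamma (1 - ε)) := by
  have hlower := rpow_div_Gamma_le_one_div_mul_Be (a := y - 1) (t := 1 - ε) (by linarith)
    (by linarith) (by linarith)
  have hupper := one_div_mul_Be_le_rpow_div_Gamma (a := y - 1) (t := 1 - ε) (by linarith)
    (by linarith) (by linarith)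
  rw [sub_add_cancel, sub_sub_cancel_left] at hlower
  rw [sub_sub_cancel_left] at hupper
  refine ⟨hlower, hupper.trans ?_⟩
  rw [← div_rpow (by linarith) zero_le_two]
  refine div_le_div_of_nonneg_right ?_ (Gamma_pos_of_pos (by linarith)).le
  exact rpow_le_rpow_of_nonpos (by linarith) (by linarith) (by linarith)

end Beta

theorem rpow_neg_exp_neg_log_log_add {y : ℝ} (hy : 1 < y) (x : ℝ) :
    y ^ (-exp (-(log (log y) + x))) = exp (-exp (-x)) := by
  have hlog := log_pos hy
  rw [rpow_def_of_pos (by linarith), neg_add, exp_add, exp_neg (log (log y)), exp_log hlog]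
  field_simp

theorem tendsto_exp_neg_log_log_add_atTop (x : ℝ) :
    Tendsto (fun y => exp (-(log (log y) + x))) atTop (𝓝 0) :=
  tendsto_exp_atBot.comp <| tendsto_neg_atTop_atBot.comp <|
    tendsto_atTop_add_const_right _ x (tendsto_log_atTop.comp tendsto_log_atTop)

theorem tendsto_one_div_mul_Be_log_log_add (x : ℝ) :
    Tendsto (fun y => 1 / ((y - 1) * Be (y - 1) (1 - exp (-(log (log y) + x)))))
      atTop (𝓝 (exp (-exp (-x)))) := by
  set ε : ℝ → ℝ := fun y => exp (-(log (log y) + x))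
  have hε : Tendsto ε atTop (𝓝 0) := tendsto_exp_neg_log_log_add_atTop x
  have hΓ : Tendsto (fun y => Gamma (1 - ε y)) atTop (𝓝 1) := by
    have h1 : Tendsto (fun y => 1 - ε y) atTop (𝓝 1) := by
      simpa using tendsto_const_nhds.sub hε
    have := continuousAt_Gamma_one.tendsto.comp h1
    rwa [Gamma_one] at this
  have h2 : Tendsto (fun y => (2 : ℝ) ^ (-ε y)) atTop (𝓝 1) := by
    have h0 : Tendsto (fun y => -ε y) atTop (𝓝 0) := by simpa using hε.neg
    simpa using tendsto_const_nhds.rpow h0 (Or.inl two_ne_zero)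
  set c := exp (-exp (-x))
  have hlower : Tendsto (fun y => c / Gamma (1 - ε y)) atTop (𝓝 c) := by
    have := (tendsto_const_nhds (x := c)).div hΓ one_ne_zero
    rwa [div_one] at this
  have hupper : Tendsto (fun y => c / 2 ^ (-ε y) / Gamma (1 - ε y)) atTop (𝓝 c) := by
    have := ((tendsto_const_nhds (x := c)).div h2 one_ne_zero).div hΓ one_ne_zero
    rwa [div_one, div_one] at this
  have hbounds : ∀ᶠ y in atTop, 1 / ((y - 1) * Be (y - 1) (1 - ε y)) ∈
      Set.Icc (c / Gamma (1 - ε y)) (c / 2 ^ (-ε y) / Gamma (1 - ε y)) := by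
    filter_upwards [eventually_ge_atTop 2, hε.eventually_lt_const one_pos] with y hy hε₁
    have hc : y ^ (-ε y) = c := rpow_neg_exp_neg_log_log_add (by linarith) x
    rw [← hc]
    exact one_div_mul_Be_sub_one_mem_Icc hy (exp_pos _) hε₁
  exact tendsto_of_tendsto_of_tendsto_of_le_of_le' hlower hupper
    (hbounds.mono fun _ h => h.1) (hbounds.mono fun _ h => h.2)

theorem stmt19 (x : ℝ) :
    Filter.Tendsto (fun n : ℕ =>
        1 / (((n : ℝ) - 1) *
          Be ((n : ℝ) - 1) (1 - Real.exp (-(Real.log (Real.log n) + x)))))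
      Filter.atTop (nhds (Real.exp (-Real.exp (-x)))) :=
  (tendsto_one_div_mul_Be_log_log_add x).comp tendsto_natCast_atTop_atTop
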